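/- Let n ≥ 2, let I ⊆ ℝ be an interval, let ω = (ω₁,…,ωₙ) be a Chebyshev system on I such that (ω₁,…,ω_{n−1}) is also a Chebyshev system on I, let cₙ ∈ ℝ and f : I → ℝ. Then for any n−1 pairwise distinct points x₁,…,x_{n−1} in the interior of I there exist constants c₁,…,c_{n−1} ∈ ℝ such that the function g = c₁ω₁ + ⋯ + c_{n−1}ω_{n−1} + cₙωₙ satisfies g(xₖ) = f(xₖ) for k = 1,…,n−1 and f(x) − g(x) = ( D_{n−1}(x₁,…,x_{n−1},x;f) − cₙ·Vₙ(x₁,…,x_{n−1},x) ) / V_{n−1}(x₁,…,x_{n−1}) for all x ∈ I \ {x₁,…,x_{n−1}}. -/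

import Mathlib

/-- `chebV ω x` is the determinant `Vₙ(x₁,…,xₙ)` with `(i,j)` entry `ωᵢ(xⱼ)`. -/
noncomputable def chebV {n : ℕ} (ω : Fin n → ℝ → ℝ) (x : Fin n → ℝ) : ℝ :=
  Matrix.det (Matrix.of fun i j => ω i (x j))

/-- `chebD ω f x` is the determinant `Dₙ(x₁,…,x_{n+1};f)` whose first `n` rows are
`ωᵢ(x₁),…,ωᵢ(x_{n+1})` and whose last row is `f(x₁),…,f(x_{n+1})`. -/
noncomputable def chebD {n : ℕ} (ω : Fin n → ℝ → ℝ) (f : ℝ → ℝ) (x : Fin (n + 1) → ℝ) : ℝ :=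
  Matrix.det (Matrix.of (Fin.snoc (fun i j => ω i (x j)) (fun j => f (x j)) :
    Fin (n + 1) → Fin (n + 1) → ℝ))

/-- `ω = (ω₁,…,ωₙ)` is a Chebyshev system on `I`: the `ωᵢ` are continuous on `I` and
`Vₙ(x₁,…,xₙ) ≠ 0` whenever `x₁ < ⋯ < xₙ` in `I`. -/
def IsChebyshevOn {n : ℕ} (ω : Fin n → ℝ → ℝ) (I : Set ℝ) : Prop :=
  (∀ i, ContinuousOn (ω i) I) ∧
    ∀ x : Fin n → ℝ, (∀ i, x i ∈ I) → StrictMono x → chebV ω x ≠ 0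

/-- `ω = (ω₁,…,ωₙ)` is a positive Chebyshev system on `I`. -/
def IsPosChebyshevOn {n : ℕ} (ω : Fin n → ℝ → ℝ) (I : Set ℝ) : Prop :=
  (∀ i, ContinuousOn (ω i) I) ∧
    ∀ x : Fin n → ℝ, (∀ i, x i ∈ I) → StrictMono x → 0 < chebV ω x

/-- The generalized divided difference `[x₁,…,x_{n+1};f]_ω = D_n(x₁,…,x_{n+1};f)/V_{n+1}(x₁,…,x_{n+1})`,
where the numerator is formed from the first `n` functions of the `(n+1)`-element system `ω`. -/
noncomputable def divDiff {n : ℕ} (ω : Fin (n + 1) → ℝ → ℝ) (f : ℝ → ℝ)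
    (x : Fin (n + 1) → ℝ) : ℝ :=
  chebD (fun i : Fin n => ω i.castSucc) f x / chebV ω x

/-- `f` is `ω`-`(n+1)`-convex on `I` for the `(n+1)`-element system `ω`. -/
def IsConvexOmega {n : ℕ} (ω : Fin (n + 1) → ℝ → ℝ) (I : Set ℝ) (f : ℝ → ℝ) : Prop :=
  ∀ x : Fin (n + 1) → ℝ, (∀ i, x i ∈ I) → StrictMono x →
    ∀ c : Fin (n + 1) → ℝ, (∀ i, (∑ k, c k * ω k (x i)) = f (x i)) →
      (∀ t ∈ I, t ≤ x 0 → 0 ≤ (-1 : ℝ) ^ (n + 1) * (f t - ∑ k, c k * ω k t)) ∧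
      (∀ j : Fin n, ∀ t ∈ I, x j.castSucc ≤ t → t ≤ x j.succ →
        0 ≤ (-1 : ℝ) ^ (n + (j : ℕ) + 2) * (f t - ∑ k, c k * ω k t)) ∧
      (∀ t ∈ I, x (Fin.last n) ≤ t → 0 ≤ f t - ∑ k, c k * ω k t)

/-! Choose `c` so that `∑ cᵢωᵢ` interpolates `f - cₙωₙ` at the nodes; this is possible because
the nodes, once sorted, make `V_{n-1}(x) ≠ 0`. The determinant `D_{n-1}(x, t; g)` is linear in
`g`, vanishes when `g` is one of `ω₁, …, ω_{n-1}` (two equal rows), and equals `Vₙ(x, t)` when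
`g = ωₙ`. Applied to the residual `g = f - cₙωₙ - ∑ cᵢωᵢ`, which vanishes at the nodes,
expansion along the last row leaves the single term `g(t) · V_{n-1}(x)`. -/

lemma chebV_ne_zero_of_injective {n : ℕ} {ω : Fin n → ℝ → ℝ} {I : Set ℝ}
    (h : IsChebyshevOn ω I) {x : Fin n → ℝ} (hx : ∀ i, x i ∈ I)
    (hinj : Function.Injective x) : chebV ω x ≠ 0 := by
  set σ := Tuple.sort x
  have hsorted : StrictMono (x ∘ σ) :=
    (Tuple.monotone_sort x).strictMono_of_injective (hinj.comp σ.injective)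
  have hperm : chebV ω (x ∘ σ) = (Equiv.Perm.sign σ : ℝ) * chebV ω x :=
    Matrix.det_permute' σ (Matrix.of fun i j => ω i (x j))
  have hsortedV := h.2 (x ∘ σ) (fun i => hx _) hsorted
  rw [hperm] at hsortedV
  exact right_ne_zero_of_mul hsortedV

lemma exists_sum_mul_eq_of_chebV_ne_zero {n : ℕ} {φ : Fin n → ℝ → ℝ} {x : Fin n → ℝ}
    (hV : chebV φ x ≠ 0) (b : Fin n → ℝ) :
    ∃ c : Fin n → ℝ, ∀ k, ∑ i, c i * φ i (x k) = b k := by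
  have hunit : IsUnit (Matrix.of fun i j => φ i (x j)) :=
    (Matrix.isUnit_iff_isUnit_det _).2 hV.isUnit
  obtain ⟨c, hc⟩ := Matrix.vecMul_surjective_iff_isUnit.2 hunit b
  exact ⟨c, fun k => congrFun hc k⟩

section chebD

variable {n : ℕ} (φ : Fin n → ℝ → ℝ)

lemma chebD_eq_sum (g : ℝ → ℝ) (y : Fin (n + 1) → ℝ) :
    chebD φ g y =
      ∑ j : Fin (n + 1), (-1 : ℝ) ^ (n + (j : ℕ)) * g (y j) * chebV φ (y ∘ j.succAbove) := by
  rw [chebD, Matrix.det_succ_row _ (Fin.last n)]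
  refine Finset.sum_congr rfl fun j _ => ?_
  simp [chebV, Matrix.submatrix, Fin.snoc]

lemma chebD_sub_mul (f g : ℝ → ℝ) (a : ℝ) (y : Fin (n + 1) → ℝ) :
    chebD φ (fun t => f t - a * g t) y = chebD φ f y - a * chebD φ g y := by
  simp only [chebD_eq_sum, Finset.mul_sum, ← Finset.sum_sub_distrib]
  exact Finset.sum_congr rfl fun j _ => by ring

lemma chebD_sub_sum_mul (f : ℝ → ℝ) (c : Fin n → ℝ) (y : Fin (n + 1) → ℝ) :
    chebD φ (fun t => f t - ∑ i, c i * φ i t) y =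
      chebD φ f y - ∑ i, c i * chebD φ (φ i) y := by
  simp only [chebD_eq_sum, Finset.mul_sum, Finset.sum_mul, mul_sub, sub_mul,
    Finset.sum_sub_distrib]
  rw [Finset.sum_comm]
  congr 1
  exact Finset.sum_congr rfl fun i _ => Finset.sum_congr rfl fun j _ => by ring

lemma chebD_self_eq_zero (i : Fin n) (y : Fin (n + 1) → ℝ) : chebD φ (φ i) y = 0 :=
  Matrix.det_zero_of_row_eq (Fin.castSucc_lt_last i).ne (by ext j; simp)

lemma chebD_snoc_of_forall_eq_zero {g : ℝ → ℝ} {x : Fin n → ℝ} (hg : ∀ k, g (x k) = 0)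
    (t : ℝ) : chebD φ g (Fin.snoc x t) = g t * chebV φ x := by
  rw [chebD_eq_sum, Fin.sum_univ_castSucc]
  simp [hg]

end chebD

lemma chebV_eq_chebD {n : ℕ} (ω : Fin (n + 1) → ℝ → ℝ) (y : Fin (n + 1) → ℝ) :
    chebV ω y = chebD (fun i : Fin n => ω i.castSucc) (ω (Fin.last n)) y := by
  rw [chebV, chebD, ← Fin.snoc_init_self fun i j => ω i (y j)]
  rfl

theorem exists_interpolant_sub_eq_general {m : ℕ} (I : Set ℝ)
    (ω : Fin (m + 2) → ℝ → ℝ)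
    (hω' : IsChebyshevOn (fun i : Fin (m + 1) => ω i.castSucc) I)
    (cn : ℝ) (f : ℝ → ℝ)
    (x : Fin (m + 1) → ℝ) (hx : ∀ i, x i ∈ interior I)
    (hinj : Function.Injective x) :
    ∃ c : Fin (m + 1) → ℝ,
      (∀ k, (∑ i, c i * ω i.castSucc (x k)) + cn * ω (Fin.last (m + 1)) (x k) = f (x k)) ∧
      ∀ t ∈ I \ Set.range x,
        f t - ((∑ i, c i * ω i.castSucc t) + cn * ω (Fin.last (m + 1)) t) =
          (chebD (fun i : Fin (m + 1) => ω i.castSucc) f (Fin.snoc x t) -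
              cn * chebV ω (Fin.snoc x t)) /
            chebV (fun i : Fin (m + 1) => ω i.castSucc) x := by
  set φ := fun i : Fin (m + 1) => ω i.castSucc
  set h := fun s => f s - cn * ω (Fin.last (m + 1)) s
  have hV : chebV φ x ≠ 0 :=
    chebV_ne_zero_of_injective hω' (fun i => interior_subset (hx i)) hinj
  obtain ⟨c, hc⟩ := exists_sum_mul_eq_of_chebV_ne_zero hV fun k => h (x k)
  refine ⟨c, fun k => by linarith [hc k], ?_⟩
  rintro t -
  have hres := chebD_snoc_of_forall_eq_zero φ (g := fun s => h s - ∑ i, c i * φ i s)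
    (fun k => sub_eq_zero.2 (hc k).symm) t
  rw [chebD_sub_sum_mul, chebD_sub_mul, ← chebV_eq_chebD] at hres
  simp only [chebD_self_eq_zero, mul_zero, Finset.sum_const_zero, sub_zero] at hres
  rw [hres, mul_div_cancel_right₀ _ hV]
  ring

/-- **Lemma 1.** Given `cₙ ∈ ℝ` and `n−1 = m+1` pairwise distinct points in the interior of `I`,
there exist constants `c₁,…,c_{n−1}` such that `g = c₁ω₁ + ⋯ + c_{n−1}ω_{n−1} + cₙωₙ`
interpolates `f` at the given points and
`f(x) − g(x) = (D_{n−1}(x₁,…,x_{n−1},x;f) − cₙ·Vₙ(x₁,…,x_{n−1},x)) / V_{n−1}(x₁,…,x_{n−1})`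
for all `x ∈ I \ {x₁,…,x_{n−1}}`. -/
theorem exists_interpolant_sub_eq {m : ℕ} (I : Set ℝ) (hI : I.OrdConnected)
    (ω : Fin (m + 2) → ℝ → ℝ)
    (hω : IsChebyshevOn ω I)
    (hω' : IsChebyshevOn (fun i : Fin (m + 1) => ω i.castSucc) I)
    (cn : ℝ) (f : ℝ → ℝ)
    (x : Fin (m + 1) → ℝ) (hx : ∀ i, x i ∈ interior I)
    (hinj : Function.Injective x) :
    ∃ c : Fin (m + 1) → ℝ,
      (∀ k, (∑ i, c i * ω i.castSucc (x k)) + cn * ω (Fin.last (m + 1)) (x k) = f (x k)) ∧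
      ∀ t ∈ I \ Set.range x,
        f t - ((∑ i, c i * ω i.castSucc t) + cn * ω (Fin.last (m + 1)) t) =
          (chebD (fun i : Fin (m + 1) => ω i.castSucc) f (Fin.snoc x t) -
              cn * chebV ω (Fin.snoc x t)) /
            chebV (fun i : Fin (m + 1) => ω i.castSucc) x :=
  exists_interpolant_sub_eq_general I ω hω' cn f x hx hinj
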